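/- arXiv:0910.0535 — 2 statements merged into one kernel-verified Lean document; each statement's English description precedes it below -/
import Mathlib

section
/- For every cardinal λ ≥ 1, the Brandt λ⁰-extension B⁰_λ(S) of a semigroup S with zero is a primitive inverse semigroup if and only if S is a primitive inverse semigroup. -/
attribute [local instance] Classical.propDecidable

/-- The Brandt `λ⁰`-extension of a semigroup `S` with zero, with index set `I`:
its elements are `0` (encoded `none`) and triples `(α, s, β)` with `s ≠ 0`. -/
def Brandt (I S : Type*) [Zero S] : Type _ := Option (I × {s : S // s ≠ 0} × I)

instance brandtZero {I S : Type*} [Zero S] : Zero (Brandt I S) := ⟨none⟩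

/-- Multiplication on the Brandt `λ⁰`-extension. -/
noncomputable def brandtMul {I S : Type*} [Zero S] [Mul S] :
    Brandt I S → Brandt I S → Brandt I S
  | some (α, a, β), some (γ, b, δ) =>
      if h : β = γ ∧ a.1 * b.1 ≠ 0 then some (α, ⟨a.1 * b.1, h.2⟩, δ) else none
  | _, _ => none

noncomputable instance brandtMulInst {I S : Type*} [Zero S] [Mul S] :
    Mul (Brandt I S) := ⟨brandtMul⟩

/-- The semigroup of `I × I`-matrix units. -/
def MatrixUnits (I : Type*) := Option (I × I)

instance muZero {I : Type*} : Zero (MatrixUnits I) := ⟨none⟩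

noncomputable instance muMul {I : Type*} : Mul (MatrixUnits I) :=
  ⟨fun x y => match x, y with
    | some (a, b), some (c, d) => if b = c then some (a, d) else none
    | _, _ => none⟩

/-- The subset of `Brandt I S` induced by a subset `T ⊆ S`
(the Brandt extension of `T` inside that of `S`). -/
def brandtSet {I S : Type*} [Zero S] (T : Set S) : Set (Brandt I S) :=
  {z | z = 0 ∨ ∃ (α β : I) (s : {s : S // s ≠ 0}), s.1 ∈ T ∧ z = some (α, s, β)}

/-- The map `B⁰_{λ₁}(S) → B⁰_{λ₂}(T)` induced by `h : S → T`, an index map `φ`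
and families `u`, `v` (`v` playing the role of `a ↦ u(a)⁻¹`):
`(α,s,β) ↦ (φ α, u α · h s · v β, φ β)` when the middle entry is nonzero, else `0`. -/
noncomputable def brandtHomMap {I₁ I₂ S T : Type*} [Zero S] [Zero T] [Mul T]
    (φ : I₁ → I₂) (u v : I₁ → T) (h : S → T) : Brandt I₁ S → Brandt I₂ T
  | some (a, s, b) =>
      if hh : u a * h s.1 * v b ≠ 0 then
        some (φ a, ⟨u a * h s.1 * v b, hh⟩, φ b) else none
  | none => none

/-- The canonical copy of `S` in `Brandt I S` at index `α` (the set `S_{α,α}`). -/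
noncomputable def brandtIncl {I S : Type*} [Zero S] (α : I) : S → Brandt I S :=
  fun s => if h : s = 0 then 0 else some (α, ⟨s, h⟩, α)

/-- An inverse semigroup: every element has a unique (generalized) inverse. -/
def IsInverseSemigroup (S : Type*) [Mul S] : Prop :=
  ∀ x : S, ∃! y : S, x * y * x = x ∧ y * x * y = y

/-- A primitive inverse semigroup with zero: an inverse semigroup in which
every nonzero idempotent is primitive (minimal among nonzero idempotents). -/
def IsPrimitiveInverse (S : Type*) [Mul S] [Zero S] : Prop :=
  IsInverseSemigroup S ∧
    ∀ e f : S, e * e = e → f * f = f → e ≠ 0 → f ≠ 0 → e * f = e → f * e = e → e = f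

/-!
Multiplication in `B⁰_λ(S)` is the multiplication of `S` on middle entries, twisted by the
matrix-unit rule on indices: `(α, a, β)(γ, b, δ) = (α, ab, δ)` if `β = γ` and `0` otherwise.
Hence the inverses of a nonzero `(α, a, β)` are exactly the `(β, b, α)` with `b` an inverse of `a`,
and two nonzero idempotents with `EF = FE = E` share one index `α`, so `E = (α, e, α)`,
`F = (α, f, α)` with `ef = fe = e`. Both conditions thus transfer between `S` and any copy
`{(α, s, α)} ∪ {0}` of it, which exists since `λ ≥ 1`.
-/

def IsInverse {M : Type*} [Mul M] (x y : M) : Prop :=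
  x * y * x = x ∧ y * x * y = y

def NonzeroIdempotentsPrimitive (M : Type*) [Mul M] [Zero M] : Prop :=
  ∀ e f : M, e * e = e → f * f = f → e ≠ 0 → f ≠ 0 → e * f = e → f * e = e → e = f

lemma isInverse_zero_iff {M : Type*} [MulZeroClass M] {y : M} : IsInverse 0 y ↔ y = 0 := by
  simp [IsInverse, eq_comm]

lemma existsUnique_isInverse_zero {M : Type*} [MulZeroClass M] : ∃! y : M, IsInverse 0 y := by
  simpa only [isInverse_zero_iff] using existsUnique_eq

namespace Brandt

variable {I S : Type*}

section Zero

variable [Zero S] {α β γ δ : I} {a b : S}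

/-- The triple `(α, a, β)`, read as `0` when `a = 0`; with this convention the product of two
triples has the uniform formula `mk_mul_mk`. -/
noncomputable def mk (α : I) (a : S) (β : I) : Brandt I S :=
  if h : a = 0 then 0 else some (α, ⟨a, h⟩, β)

lemma mk_of_ne_zero (ha : a ≠ 0) : mk α a β = some (α, ⟨a, ha⟩, β) :=
  dif_neg ha

@[simp]
lemma mk_zero : mk α (0 : S) β = 0 :=
  dif_pos rfl

@[simp]
lemma mk_eq_zero : mk α a β = 0 ↔ a = 0 := by
  by_cases h : a = 0
  · exact iff_of_true (h ▸ mk_zero) h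
  · simp only [mk_of_ne_zero h, h, iff_false]
    exact Option.some_ne_none _

lemma mk_eq_mk_iff (ha : a ≠ 0) :
    mk α a β = mk γ b δ ↔ α = γ ∧ a = b ∧ β = δ := by
  by_cases hb : b = 0
  · simp [hb, ha]
  · rw [mk_of_ne_zero ha, mk_of_ne_zero hb]
    change (some _ : Option _) = some _ ↔ _
    simp

lemma mk_inj : mk α a β = mk α b β ↔ a = b := by
  by_cases ha : a = 0
  · simp [ha, eq_comm]
  · simp [mk_eq_mk_iff ha]

lemma eq_zero_or_eq_mk (x : Brandt I S) : x = 0 ∨ ∃ α a β, a ≠ 0 ∧ x = mk α a β := by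
  rcases x with _ | ⟨α, ⟨a, ha⟩, β⟩
  · exact Or.inl rfl
  · exact Or.inr ⟨α, a, β, ha, (mk_of_ne_zero ha).symm⟩

end Zero

noncomputable instance [Zero S] [Mul S] : MulZeroClass (Brandt I S) where
  zero_mul x := by cases x <;> rfl
  mul_zero x := by cases x <;> rfl

section MulZeroClass

variable [MulZeroClass S] {α β γ δ α' δ' : I} {a b c : S}

lemma mk_mul_mk : mk α a β * mk γ b δ = if β = γ then mk α (a * b) δ else 0 := by
  by_cases ha : a = 0
  · simp [ha]
  by_cases hb : b = 0
  · simp [hb]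
  rw [mk_of_ne_zero ha, mk_of_ne_zero hb]
  change (if h : β = γ ∧ a * b ≠ 0 then some (α, ⟨a * b, h.2⟩, δ) else none :
    Option (I × {s : S // s ≠ 0} × I)) = (_ : Brandt I S)
  by_cases h : β = γ ∧ a * b ≠ 0
  · rw [dif_pos h, if_pos h.1, mk_of_ne_zero h.2]
  · rw [dif_neg h]
    split_ifs with hβγ
    · exact (mk_eq_zero.mpr (not_not.mp fun hab => h ⟨hβγ, hab⟩)).symm
    · rfl

lemma mk_mul_mk_eq_mk_iff (hc : c ≠ 0) :
    mk α a β * mk γ b δ = mk α' c δ' ↔ β = γ ∧ α = α' ∧ a * b = c ∧ δ = δ' := by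
  rw [mk_mul_mk]
  split_ifs with hβγ
  · rw [eq_comm, mk_eq_mk_iff hc]
    tauto
  · simp [hβγ, eq_comm, hc]

lemma mk_mul_mk_mul_mk_eq_mk_iff {ε ζ : I} {d : S} (hd : d ≠ 0) :
    mk α a β * mk γ b δ * mk ε c ζ = mk α' d ζ' ↔
      β = γ ∧ δ = ε ∧ α = α' ∧ a * b * c = d ∧ ζ = ζ' := by
  rw [mk_mul_mk]
  split_ifs with hβγ
  · rw [mk_mul_mk_eq_mk_iff hd]
    tauto
  · simp [hβγ, eq_comm, hd]

lemma isInverse_mk_iff {Y : Brandt I S} (ha : a ≠ 0) :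
    IsInverse (mk α a β) Y ↔ ∃ b, Y = mk β b α ∧ IsInverse a b := by
  constructor
  · rintro ⟨h₁, h₂⟩
    rcases Y.eq_zero_or_eq_mk with rfl | ⟨γ, b, δ, hb, rfl⟩
    · rw [mul_zero, zero_mul, eq_comm, mk_eq_zero] at h₁
      exact absurd h₁ ha
    obtain ⟨rfl, rfl, -, hab, -⟩ := (mk_mul_mk_mul_mk_eq_mk_iff ha).mp h₁
    exact ⟨b, rfl, hab, ((mk_mul_mk_mul_mk_eq_mk_iff hb).mp h₂).2.2.2.1⟩
  · rintro ⟨b, rfl, hab, hba⟩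
    have hb : b ≠ 0 := by
      rintro rfl
      rw [mul_zero, zero_mul] at hab
      exact ha hab.symm
    exact ⟨(mk_mul_mk_mul_mk_eq_mk_iff ha).mpr ⟨rfl, rfl, rfl, hab, rfl⟩,
      (mk_mul_mk_mul_mk_eq_mk_iff hb).mpr ⟨rfl, rfl, rfl, hba, rfl⟩⟩

lemma existsUnique_isInverse_mk_iff (ha : a ≠ 0) :
    (∃! Y, IsInverse (mk α a β) Y) ↔ ∃! b, IsInverse a b := by
  simp only [isInverse_mk_iff ha]
  constructor
  · rintro ⟨-, ⟨b, rfl, hb⟩, huniq⟩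
    exact ⟨b, hb, fun b' hb' => mk_inj.mp (huniq _ ⟨b', rfl, hb'⟩)⟩
  · rintro ⟨b, hb, huniq⟩
    refine ⟨mk β b α, ⟨b, rfl, hb⟩, ?_⟩
    rintro _ ⟨b', rfl, hb'⟩
    rw [huniq b' hb']

end MulZeroClass

variable [MulZeroClass S] [Nonempty I]

theorem isInverseSemigroup_iff : IsInverseSemigroup (Brandt I S) ↔ IsInverseSemigroup S := by
  constructor
  · intro h x
    by_cases hx : x = 0
    · subst hx
      exact existsUnique_isInverse_zero
    · obtain ⟨α⟩ := ‹Nonempty I›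
      exact (existsUnique_isInverse_mk_iff (α := α) (β := α) hx).mp (h _)
  · intro h X
    rcases X.eq_zero_or_eq_mk with rfl | ⟨α, a, β, ha, rfl⟩
    · exact existsUnique_isInverse_zero
    · exact (existsUnique_isInverse_mk_iff ha).mpr (h a)

theorem nonzeroIdempotentsPrimitive_iff :
    NonzeroIdempotentsPrimitive (Brandt I S) ↔ NonzeroIdempotentsPrimitive S := by
  constructor
  · intro h e f he hf he0 hf0 hef hfe
    obtain ⟨α⟩ := ‹Nonempty I›
    refine mk_inj.mp (h (mk α e α) (mk α f α) ?_ ?_ ?_ ?_ ?_ ?_)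
    · exact (mk_mul_mk_eq_mk_iff he0).mpr ⟨rfl, rfl, he, rfl⟩
    · exact (mk_mul_mk_eq_mk_iff hf0).mpr ⟨rfl, rfl, hf, rfl⟩
    · exact mk_eq_zero.not.mpr he0
    · exact mk_eq_zero.not.mpr hf0
    · exact (mk_mul_mk_eq_mk_iff he0).mpr ⟨rfl, rfl, hef, rfl⟩
    · exact (mk_mul_mk_eq_mk_iff he0).mpr ⟨rfl, rfl, hfe, rfl⟩
  · intro h E F hE hF hE0 hF0 hEF hFE
    obtain ⟨α, e, β, he0, rfl⟩ := E.eq_zero_or_eq_mk.resolve_left hE0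
    obtain ⟨γ, f, δ, hf0, rfl⟩ := F.eq_zero_or_eq_mk.resolve_left hF0
    rw [mk_mul_mk_eq_mk_iff he0] at hE hEF hFE
    rw [mk_mul_mk_eq_mk_iff hf0] at hF
    obtain ⟨rfl, -, he, -⟩ := hE
    obtain ⟨rfl, -, hf, -⟩ := hF
    obtain ⟨rfl, -, hef, -⟩ := hEF
    rw [h e f he hf he0 hf0 hef hFE.2.2.1]

end Brandt

/-- `B⁰_λ(S)` is a primitive inverse semigroup iff `S` is. -/
theorem brandt_primitiveInverse_iff {I S : Type*} [SemigroupWithZero S] [Nonempty I] :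
    IsPrimitiveInverse (Brandt I S) ↔ IsPrimitiveInverse S :=
  and_congr Brandt.isInverseSemigroup_iff Brandt.nonzeroIdempotentsPrimitive_iff
end

section
/- Let S, T be monoids with zeros and λ₂ ≥ λ₁ ≥ 1. Suppose every idempotent of T lies in the center of T, T contains no copy of the I_{λ₁} × I_{λ₁}-matrix units semigroup, and T contains no copy of the 2×2-matrix units semigroup whose zero equals the zero of T. Then every non-trivial homomorphism σ : B⁰_{λ₁}(S) → B⁰_{λ₂}(T) has the form σ(α,s,β) = (φ(α), u(α)·h(s)·u(β)⁻¹, φ(β)) for s with h(s) ≠ 0_T, and σ(α,s,β) = 0₂ for h(s) = 0_T, and σ(0₁) = 0₂, where h : S → T is a homomorphism with h(0_S) = 0_T, φ : I_{λ₁} → I_{λ₂} is injective, and u : I_{λ₁} → H_e is a map into a maximal subgroup H_e of T at a non-zero idempotent e. -/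
attribute [local instance] Classical.propDecidable

/-- The non-zero element `(α, s, β)` of `Brandt I S`. -/
def brandtElt {I S : Type*} [Zero S] (α : I) (s : {s : S // s ≠ 0}) (β : I) :
    Brandt I S := some (α, s, β)

/-!
The unit elements `(α, 1, β)` of `B⁰_{λ₁}(S)` multiply like matrix units, so their images
under `σ` are triples `(φ α, W α β, φ β)` with `W α β · W β γ = W α γ`. If `σ 0` were a non-zero
triple with middle entry `t`, all these triples would live over one index, and the `W α β`
together with `t` would form a copy of the `I_{λ₁} × I_{λ₁}`-matrix units in `T`; hence
`σ 0 = 0`. If `φ β = φ γ` for some `β ≠ γ`, then `W` restricted to `{β, γ}` is a copy of the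
`2 × 2`-matrix units with zero `0_T`; hence `φ` is injective. Fixing an index `o`,
`e = W o o` is an idempotent, `u α = W α o` and `v α = W o α` are mutually inverse in `H_e`
(centrality of idempotents forces `W α α = e`), `h` is read off from `σ` on the corner
`S_{o,o}`, and `σ(α, s, β) = σ(α, 1, o) σ(o, s, o) σ(o, 1, β)` gives the formula.
-/

namespace MatrixUnits

variable {I T : Type*}

noncomputable instance : MulZeroClass (MatrixUnits I) where
  zero_mul _ := rfl
  mul_zero x := by rcases x with _ | ⟨_, _⟩ <;> rfl

def mk (a b : I) : MatrixUnits I := some (a, b)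

theorem eq_zero_or_exists_eq_mk (x : MatrixUnits I) : x = 0 ∨ ∃ a b, x = mk a b := by
  rcases x with _ | ⟨a, b⟩
  exacts [Or.inl rfl, Or.inr ⟨a, b, rfl⟩]

theorem mk_mul_mk (a b c d : I) : mk a b * mk c d = if b = c then mk a d else 0 := rfl

def lift (t : T) (w : I → I → T) : MatrixUnits I → T
  | some (a, b) => w a b
  | none => t

variable [Mul T] {t : T} {w : I → I → T}

theorem lift_mul (hw : ∀ a b c, w a b * w b c = w a c)
    (ht : ∀ a b c d, b ≠ c → w a b * w c d = t) (hwt : ∀ a b, w a b * t = t)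
    (htw : ∀ a b, t * w a b = t) (htt : t * t = t) (x y : MatrixUnits I) :
    lift t w (x * y) = lift t w x * lift t w y := by
  rcases eq_zero_or_exists_eq_mk x with rfl | ⟨a, b, rfl⟩ <;>
    rcases eq_zero_or_exists_eq_mk y with rfl | ⟨c, d, rfl⟩
  · exact htt.symm
  · exact (htw c d).symm
  · exact (hwt a b).symm
  · rw [mk_mul_mk]
    split_ifs with hbc
    · subst hbc
      exact (hw a b d).symm
    · exact (ht a b c d hbc).symm

theorem lift_injective (hw : ∀ a b c, w a b * w b c = w a c)
    (ht : ∀ a b c d, b ≠ c → w a b * w c d = t) (hne : ∀ a b, w a b ≠ t) :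
    Function.Injective (lift t w) := by
  have hpair : ∀ a b c d, w a b = w c d → a = c ∧ b = d := by
    intro a b c d h
    by_contra hne'
    by_cases hbd : b = d
    · subst hbd
      have hac : a ≠ c := fun hac => hne' ⟨hac, rfl⟩
      exact hne a b (by rw [← hw a a b, h, ht a a c b hac])
    · exact hne a b (by rw [← hw a b b, h, ht c d b b (Ne.symm hbd)])
  intro x y hxy
  rcases eq_zero_or_exists_eq_mk x with rfl | ⟨a, b, rfl⟩ <;>
    rcases eq_zero_or_exists_eq_mk y with rfl | ⟨c, d, rfl⟩
  · rfl
  · exact absurd hxy.symm (hne c d)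
  · exact absurd hxy (hne a b)
  · obtain ⟨rfl, rfl⟩ := hpair a b c d hxy
    rfl

theorem exists_injective_mul_hom (hw : ∀ a b c, w a b * w b c = w a c)
    (ht : ∀ a b c d, b ≠ c → w a b * w c d = t) (hwt : ∀ a b, w a b * t = t)
    (htw : ∀ a b, t * w a b = t) (htt : t * t = t) (hne : ∀ a b, w a b ≠ t) :
    ∃ f : MatrixUnits I → T, Function.Injective f ∧ (∀ x y, f (x * y) = f x * f y) ∧ f 0 = t :=
  ⟨lift t w, lift_injective hw ht hne, lift_mul hw ht hwt htw htt, rfl⟩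

end MatrixUnits

namespace Brandt

variable {I S : Type*}

section Zero

variable [Zero S]

theorem eq_zero_or_exists_eq_elt (x : Brandt I S) : x = 0 ∨ ∃ a s b, x = brandtElt a s b := by
  rcases x with _ | ⟨a, s, b⟩
  exacts [Or.inl rfl, Or.inr ⟨a, s, b, rfl⟩]

theorem elt_ne_zero (a b : I) (s : {s : S // s ≠ 0}) : brandtElt a s b ≠ 0 :=
  Option.some_ne_none _

theorem elt_inj {a b c d : I} {s t : {s : S // s ≠ 0}} :
    brandtElt a s b = brandtElt c t d ↔ a = c ∧ s = t ∧ b = d := by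
  refine ⟨fun h => ?_, fun ⟨hac, hst, hbd⟩ => hac ▸ hst ▸ hbd ▸ rfl⟩
  simpa only [Prod.mk.injEq] using Option.some.inj h

def val : Brandt I S → S
  | some (_, s, _) => s.1
  | none => 0

theorem brandtIncl_zero (a : I) : brandtIncl a (0 : S) = 0 := dif_pos rfl

theorem brandtIncl_of_ne_zero (a : I) {s : S} (hs : s ≠ 0) :
    brandtIncl a s = brandtElt a ⟨s, hs⟩ a :=
  dif_neg hs

theorem val_brandtIncl (a : I) (s : S) : val (brandtIncl a s : Brandt I S) = s := by
  by_cases hs : s = 0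
  · rw [hs, brandtIncl_zero]
    rfl
  · rw [brandtIncl_of_ne_zero a hs]
    rfl

theorem brandtIncl_injective (a : I) : Function.Injective (brandtIncl a : S → Brandt I S) :=
  Function.LeftInverse.injective (val_brandtIncl a)

theorem nonempty_and_nontrivial_of_ne {x y : Brandt I S} (h : x ≠ y) :
    Nonempty I ∧ Nontrivial S := by
  rcases eq_zero_or_exists_eq_elt x with rfl | ⟨a, s, -, -⟩
  · rcases eq_zero_or_exists_eq_elt y with rfl | ⟨a, s, -, -⟩
    · exact absurd rfl h
    · exact ⟨⟨a⟩, nontrivial_of_ne s.1 0 s.2⟩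
  · exact ⟨⟨a⟩, nontrivial_of_ne s.1 0 s.2⟩

end Zero

section Mul

variable [Zero S] [Mul S]

noncomputable instance : MulZeroClass (Brandt I S) where
  zero_mul _ := rfl
  mul_zero x := by rcases x with _ | ⟨_, _, _⟩ <;> rfl

theorem elt_mul_elt (a b c d : I) (s t : {s : S // s ≠ 0}) :
    brandtElt a s b * brandtElt c t d =
      if h : b = c ∧ s.1 * t.1 ≠ 0 then brandtElt a ⟨s.1 * t.1, h.2⟩ d else 0 :=
  rfl

theorem elt_mul_elt_eq_elt {a b c d p q : I} {s t r : {s : S // s ≠ 0}} :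
    brandtElt a s b * brandtElt c t d = brandtElt p r q ↔
      b = c ∧ a = p ∧ d = q ∧ s.1 * t.1 = r.1 := by
  rw [elt_mul_elt]
  split_ifs with h
  · simp only [elt_inj, Subtype.ext_iff, h.1, true_and]
    tauto
  · simp only [(elt_ne_zero _ _ _).symm, false_iff]
    rintro ⟨hbc, -, -, hst⟩
    exact h ⟨hbc, hst ▸ r.2⟩

theorem elt_mul_elt_eq_zero {a b c d : I} {s t : {s : S // s ≠ 0}} :
    brandtElt a s b * brandtElt c t d = 0 ↔ b ≠ c ∨ s.1 * t.1 = 0 := by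
  rw [elt_mul_elt]
  split_ifs with h
  · simp only [elt_ne_zero, false_iff, not_or, not_not]
    exact h
  · simp only [true_iff]
    tauto

theorem eq_brandtIncl_val_of_mul_eq {a b c : I} {s t : {s : S // s ≠ 0}} {x : Brandt I S}
    (hl : brandtElt a s b * x = x) (hr : x * brandtElt c t a = x) :
    x = brandtIncl a (val x) := by
  rcases eq_zero_or_exists_eq_elt x with rfl | ⟨p, r, q, rfl⟩
  · exact (brandtIncl_zero a).symm
  · obtain ⟨-, rfl, -, -⟩ := elt_mul_elt_eq_elt.mp hl
    obtain ⟨-, -, rfl, -⟩ := elt_mul_elt_eq_elt.mp hr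
    exact (brandtIncl_of_ne_zero a r.2).symm

end Mul

theorem brandtIncl_mul [MulZeroClass S] (a : I) (s t : S) :
    brandtIncl a (s * t) = (brandtIncl a s * brandtIncl a t : Brandt I S) := by
  by_cases hs : s = 0
  · rw [hs, zero_mul, brandtIncl_zero, zero_mul]
  by_cases ht : t = 0
  · rw [ht, mul_zero, brandtIncl_zero, mul_zero]
  rw [brandtIncl_of_ne_zero a hs, brandtIncl_of_ne_zero a ht, elt_mul_elt]
  by_cases hst : s * t = 0
  · rw [hst, brandtIncl_zero, dif_neg (fun h => h.2 rfl)]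
  · rw [brandtIncl_of_ne_zero a hst, dif_pos ⟨rfl, hst⟩]

theorem elt_mul_brandtIncl_mul_elt [SemigroupWithZero S] (a b c : I) (x y : {s : S // s ≠ 0})
    (t : S) :
    brandtElt a x b * (brandtIncl b t * brandtElt b y c) =
      if h : x.1 * t * y.1 ≠ 0 then brandtElt a ⟨_, h⟩ c else 0 := by
  by_cases ht : t = 0
  · subst ht
    rw [brandtIncl_zero, zero_mul, mul_zero, dif_neg (by simp)]
  rw [brandtIncl_of_ne_zero b ht, elt_mul_elt]
  by_cases hty : t * y.1 = 0
  · rw [dif_neg (fun h => h.2 hty), mul_zero, dif_neg (by simp [mul_assoc, hty])]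
  · rw [dif_pos ⟨rfl, hty⟩, elt_mul_elt]
    simp only [true_and, mul_assoc]

section Unit

variable [MulZeroOneClass S] [NeZero (1 : S)]

def unit (a b : I) : Brandt I S := brandtElt a ⟨1, one_ne_zero⟩ b

theorem unit_mul_unit (a b c : I) : (unit a b * unit b c : Brandt I S) = unit a c :=
  elt_mul_elt_eq_elt.mpr ⟨rfl, rfl, rfl, one_mul 1⟩

theorem unit_mul_unit_of_ne (a d : I) {b c : I} (hbc : b ≠ c) :
    (unit a b * unit c d : Brandt I S) = 0 :=
  elt_mul_elt_eq_zero.mpr (Or.inl hbc)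

theorem unit_mul_brandtIncl (a : I) (s : S) : unit a a * brandtIncl a s = brandtIncl a s := by
  by_cases hs : s = 0
  · rw [hs, brandtIncl_zero, mul_zero]
  · rw [brandtIncl_of_ne_zero a hs]
    exact elt_mul_elt_eq_elt.mpr ⟨rfl, rfl, rfl, one_mul s⟩

theorem brandtIncl_mul_unit (a : I) (s : S) : brandtIncl a s * unit a a = brandtIncl a s := by
  by_cases hs : s = 0
  · rw [hs, brandtIncl_zero, zero_mul]
  · rw [brandtIncl_of_ne_zero a hs]
    exact elt_mul_elt_eq_elt.mpr ⟨rfl, rfl, rfl, mul_one s⟩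

theorem unit_mul_brandtIncl_mul_unit (a b c : I) (s : {s : S // s ≠ 0}) :
    unit a c * (brandtIncl c s.1 * unit c b) = brandtElt a s b := by
  have hright : brandtElt c s c * unit c b = brandtElt c s b :=
    elt_mul_elt_eq_elt.mpr ⟨rfl, rfl, rfl, mul_one s.1⟩
  rw [brandtIncl_of_ne_zero c s.2, hright]
  exact elt_mul_elt_eq_elt.mpr ⟨rfl, rfl, rfl, one_mul s.1⟩

end Unit

section Hom

variable {I₁ I₂ T : Type*}

theorem exists_eq_elt_of_mul_eq [Zero T] [Mul T] {E : I₁ → I₁ → Brandt I₂ T}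
    (hE : ∀ a b c, E a b * E b c = E a c) (hne : ∀ a b, E a b ≠ 0) :
    ∃ (φ : I₁ → I₂) (W : I₁ → I₁ → {t : T // t ≠ 0}),
      (∀ a b, E a b = brandtElt (φ a) (W a b) (φ b)) ∧
        ∀ a b c, (W a b).1 * (W b c).1 = (W a c).1 := by
  have hform : ∀ a b, ∃ p : I₂ × {t : T // t ≠ 0} × I₂, E a b = brandtElt p.1 p.2.1 p.2.2 := by
    intro a b
    obtain ⟨p, t, q, h⟩ := (eq_zero_or_exists_eq_elt (E a b)).resolve_left (hne a b)
    exact ⟨(p, t, q), h⟩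
  choose p hp using hform
  have hprod : ∀ a b c, (p a b).2.2 = (p b c).1 ∧ (p a b).1 = (p a c).1 ∧
      (p b c).2.2 = (p a c).2.2 ∧ (p a b).2.1.1 * (p b c).2.1.1 = (p a c).2.1.1 := by
    intro a b c
    have h := hE a b c
    rw [hp, hp, hp] at h
    exact elt_mul_elt_eq_elt.mp h
  refine ⟨fun a => (p a a).1, fun a b => (p a b).2.1, fun a b => ?_,
    fun a b c => (hprod a b c).2.2.2⟩
  rw [hp, (hprod a b a).2.1, (hprod a b b).1]

variable [MulZeroOneClass S] [NeZero (1 : S)]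

theorem map_eq_map_zero_of_map_unit_eq [MulZeroClass T] {σ : Brandt I₁ S → Brandt I₂ T}
    (hσ : ∀ x y, σ (x * y) = σ x * σ y) {a b : I₁} (hab : σ (unit a b) = σ 0)
    (x : Brandt I₁ S) : σ x = σ 0 := by
  have hunit : ∀ c d, σ (unit c d) = σ 0 := by
    intro c d
    rw [← unit_mul_unit c a d, ← unit_mul_unit a b d, hσ, hσ, hab, ← hσ, ← hσ, zero_mul,
      mul_zero]
  rcases eq_zero_or_exists_eq_elt x with rfl | ⟨c, s, d, rfl⟩
  · rfl
  · rw [← unit_mul_brandtIncl_mul_unit c d c s, hσ, hunit, ← hσ, zero_mul]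

theorem map_zero_eq_zero [Zero T] [Mul T] {σ : Brandt I₁ S → Brandt I₂ T}
    (hσ : ∀ x y, σ (x * y) = σ x * σ y)
    (hno : ¬∃ f : MatrixUnits I₁ → T, Function.Injective f ∧ ∀ x y, f (x * y) = f x * f y)
    (hunit : ∀ a b, σ (unit a b) ≠ σ 0) {φ : I₁ → I₂} {W : I₁ → I₁ → {t : T // t ≠ 0}}
    (hE : ∀ a b, σ (unit a b) = brandtElt (φ a) (W a b) (φ b))
    (hW : ∀ a b c, (W a b).1 * (W b c).1 = (W a c).1) : σ 0 = 0 := by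
  rcases eq_zero_or_exists_eq_elt (σ 0) with h0 | ⟨p, t, q, h0⟩
  · exact h0
  exfalso
  have hleft : ∀ a b, φ a = p ∧ (W a b).1 * t.1 = t.1 := by
    intro a b
    have h := hσ (unit a b) 0
    rw [mul_zero, hE, h0, eq_comm, elt_mul_elt_eq_elt] at h
    exact ⟨h.2.1, h.2.2.2⟩
  have hright : ∀ a b, φ b = q ∧ t.1 * (W a b).1 = t.1 := by
    intro a b
    have h := hσ 0 (unit a b)
    rw [zero_mul, hE, h0, eq_comm, elt_mul_elt_eq_elt] at h
    exact ⟨h.2.2.1, h.2.2.2⟩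
  have htt : t.1 * t.1 = t.1 := by
    have h := hσ 0 0
    rw [zero_mul, h0, eq_comm, elt_mul_elt_eq_elt] at h
    exact h.2.2.2
  have hzero : ∀ a b c d, b ≠ c → (W a b).1 * (W c d).1 = t.1 := by
    intro a b c d hbc
    have h := hσ (unit a b) (unit c d)
    rw [unit_mul_unit_of_ne a d hbc, hE, hE, h0, eq_comm, elt_mul_elt_eq_elt] at h
    exact h.2.2.2
  have hne : ∀ a b, (W a b).1 ≠ t.1 := by
    intro a b h
    apply hunit a b
    rw [hE, h0, (hleft a b).1, (hright a b).1, Subtype.ext h]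
  obtain ⟨f, hf, hfmul, -⟩ := MatrixUnits.exists_injective_mul_hom hW hzero
    (fun a b => (hleft a b).2) (fun a b => (hright a b).2) htt hne
  exact hno ⟨f, hf, hfmul⟩

theorem injective_of_map_zero_eq_zero [MulZeroClass T] {σ : Brandt I₁ S → Brandt I₂ T}
    (hσ : ∀ x y, σ (x * y) = σ x * σ y) (hz : σ 0 = 0)
    (hno : ¬∃ f : MatrixUnits (Fin 2) → T,
      Function.Injective f ∧ (∀ x y, f (x * y) = f x * f y) ∧ f 0 = 0)
    {φ : I₁ → I₂} {W : I₁ → I₁ → {t : T // t ≠ 0}}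
    (hE : ∀ a b, σ (unit a b) = brandtElt (φ a) (W a b) (φ b))
    (hW : ∀ a b c, (W a b).1 * (W b c).1 = (W a c).1) : Function.Injective φ := by
  intro b c hbc
  by_contra hne
  have hzero : ∀ a b c d, b ≠ c → φ b = φ c → (W a b).1 * (W c d).1 = 0 := by
    intro a b c d hbc hφ
    have h := hσ (unit a b) (unit c d)
    rw [unit_mul_unit_of_ne a d hbc, hz, hE, hE, eq_comm, elt_mul_elt_eq_zero] at h
    exact h.resolve_left (not_not.mpr hφ)
  let g : Fin 2 → I₁ := ![b, c]
  have hg : Function.Injective g := by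
    intro i j hij
    fin_cases i <;> fin_cases j <;> simp_all [g]
  have hφg : ∀ i j, φ (g i) = φ (g j) := by
    intro i j
    fin_cases i <;> fin_cases j <;> simp [g, hbc]
  exact hno (MatrixUnits.exists_injective_mul_hom (w := fun i j => (W (g i) (g j)).1)
    (fun _ _ _ => hW _ _ _) (fun _ _ _ _ hij => hzero _ _ _ _ (hg.ne hij) (hφg _ _))
    (fun _ _ => mul_zero _) (fun _ _ => zero_mul _) (mul_zero 0) (fun _ _ => (W _ _).2))

theorem map_brandtIncl [Zero T] [Mul T] {σ : Brandt I₁ S → Brandt I₂ T}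
    (hσ : ∀ x y, σ (x * y) = σ x * σ y) {φ : I₁ → I₂} {W : I₁ → I₁ → {t : T // t ≠ 0}}
    (hE : ∀ a b, σ (unit a b) = brandtElt (φ a) (W a b) (φ b)) (a : I₁) (s : S) :
    σ (brandtIncl a s) = brandtIncl (φ a) (val (σ (brandtIncl a s))) :=
  eq_brandtIncl_val_of_mul_eq (s := W a a) (t := W a a)
    (by rw [← hE, ← hσ, unit_mul_brandtIncl]) (by rw [← hE, ← hσ, brandtIncl_mul_unit])

theorem eq_brandtHomMap [SemigroupWithZero T] {σ : Brandt I₁ S → Brandt I₂ T}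
    (hσ : ∀ x y, σ (x * y) = σ x * σ y) (hz : σ 0 = 0) {φ : I₁ → I₂}
    {W : I₁ → I₁ → {t : T // t ≠ 0}} (hE : ∀ a b, σ (unit a b) = brandtElt (φ a) (W a b) (φ b))
    {o : I₁} {h : S → T} (hh : ∀ s, σ (brandtIncl o s) = brandtIncl (φ o) (h s)) :
    σ = brandtHomMap φ (fun a => (W a o).1) (fun b => (W o b).1) h := by
  funext x
  rcases eq_zero_or_exists_eq_elt x with rfl | ⟨a, s, b, rfl⟩
  · exact hz
  · calc σ (brandtElt a s b) = σ (unit a o * (brandtIncl o s.1 * unit o b)) := by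
          rw [unit_mul_brandtIncl_mul_unit]
      _ = _ := by
          rw [hσ, hσ, hE, hE, hh, elt_mul_brandtIncl_mul_elt]
          rfl

end Hom

theorem mul_hom_of_map_brandtIncl {I₁ I₂ T : Type*} [MulZeroClass S] [MulZeroClass T]
    {σ : Brandt I₁ S → Brandt I₂ T} (hσ : ∀ x y, σ (x * y) = σ x * σ y) {a : I₁} {b : I₂}
    {h : S → T} (hh : ∀ s, σ (brandtIncl a s) = brandtIncl b (h s)) (s t : S) :
    h (s * t) = h s * h t :=
  brandtIncl_injective b (by rw [← hh, brandtIncl_mul, hσ, hh, hh, brandtIncl_mul])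

end Brandt

theorem map_ne_zero_of_map_ne_map_zero {M N : Type*} [MulZeroClass M] [MulZeroClass N]
    {f : M → N} (hf : ∀ x y, f (x * y) = f x * f y) {x : M} (hx : f x ≠ f 0) : f x ≠ 0 := by
  intro h
  apply hx
  rw [h, ← mul_zero x, hf, h, zero_mul]


theorem mul_eq_of_mul_eq_of_central {T : Type*} [Semigroup T]
    (hcentral : ∀ e : T, e * e = e → ∀ z, e * z = z * e) {e x y : T} (he : e * e = e)
    (hxe : x * e = x) (hyx : y * x = e) : x * y = e := by
  have hidem : x * y * (x * y) = x * y := by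
    rw [mul_assoc, ← mul_assoc y, hyx, ← mul_assoc, hxe]
  calc x * y = x * e * y := by rw [hxe]
    _ = e * (x * y) := by rw [mul_assoc, hcentral e he y, ← mul_assoc, ← hcentral e he]
    _ = y * x * (x * y) := by rw [hyx]
    _ = y * (x * y * x) := by rw [mul_assoc, ← hcentral _ hidem x]
    _ = y * x * (y * x) := by simp only [mul_assoc]
    _ = e := by rw [hyx, he]

theorem brandt_hom_classification_general {I₁ I₂ S T : Type*}
    [MonoidWithZero S] [MonoidWithZero T]
    (hcentral : ∀ e : T, e * e = e → ∀ x : T, e * x = x * e)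
    (hno1 : ¬∃ f : MatrixUnits I₁ → T,
        Function.Injective f ∧ ∀ x y, f (x * y) = f x * f y)
    (hno2 : ¬∃ f : MatrixUnits (Fin 2) → T,
        Function.Injective f ∧ (∀ x y, f (x * y) = f x * f y) ∧ f 0 = 0)
    (σ : Brandt I₁ S → Brandt I₂ T)
    (hmul : ∀ x y, σ (x * y) = σ x * σ y)
    (hnt : ∃ x y, σ x ≠ σ y) :
    ∃ (h : S → T) (φ : I₁ → I₂) (e : T) (u v : I₁ → T),
      (∀ s t : S, h (s * t) = h s * h t) ∧ h 0 = 0 ∧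
      Function.Injective φ ∧
      e * e = e ∧ e ≠ 0 ∧
      (∀ a : I₁, u a * e = u a ∧ e * u a = u a ∧ v a * e = v a ∧ e * v a = v a ∧
        u a * v a = e ∧ v a * u a = e) ∧
      σ = brandtHomMap φ u v h := by
  obtain ⟨x₀, y₀, hxy⟩ := hnt
  obtain ⟨⟨O⟩, _⟩ := Brandt.nonempty_and_nontrivial_of_ne (ne_of_apply_ne σ hxy)
  have hunit : ∀ a b, σ (Brandt.unit a b) ≠ σ 0 := fun a b hab => hxy <| by
    rw [Brandt.map_eq_map_zero_of_map_unit_eq hmul hab x₀,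
      Brandt.map_eq_map_zero_of_map_unit_eq hmul hab y₀]
  obtain ⟨φ, W, hE, hW⟩ := Brandt.exists_eq_elt_of_mul_eq (E := fun a b => σ (Brandt.unit a b))
    (fun a b c => by rw [← hmul, Brandt.unit_mul_unit])
    (fun a b => map_ne_zero_of_map_ne_map_zero hmul (hunit a b))
  have hz := Brandt.map_zero_eq_zero hmul hno1 hunit hE hW
  let h : S → T := fun s => Brandt.val (σ (brandtIncl O s))
  have hincl : ∀ s, σ (brandtIncl O s) = brandtIncl (φ O) (h s) :=
    Brandt.map_brandtIncl hmul hE O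
  have he : (W O O).1 * (W O O).1 = (W O O).1 := hW O O O
  refine ⟨h, φ, (W O O).1, fun a => (W a O).1, fun a => (W O a).1,
    Brandt.mul_hom_of_map_brandtIncl hmul hincl, ?_,
    Brandt.injective_of_map_zero_eq_zero hmul hz hno2 hE hW, he, (W O O).2,
    fun a => ⟨hW a O O, (hcentral _ he _).trans (hW a O O), (hcentral _ he _).symm.trans (hW O O a),
      hW O O a, mul_eq_of_mul_eq_of_central hcentral he (hW a O O) (hW O a O), hW O a O⟩, ?_⟩
  · show Brandt.val (σ (brandtIncl O 0)) = 0
    rw [Brandt.brandtIncl_zero, hz]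
    rfl
  · exact Brandt.eq_brandtHomMap hmul hz hE hincl

/-- If every idempotent of `T` is central, `T` contains no copy of the
`I₁ × I₁`-matrix units and no copy of the `2 × 2`-matrix units with zero the zero of
`T`, then every non-trivial homomorphism `σ : B⁰_{λ₁}(S) → B⁰_{λ₂}(T)` is of the form
`brandtHomMap φ u v h` for a zero-preserving homomorphism `h : S → T`, an injection
`φ`, and a map `u` (with inverses `v`) into a maximal subgroup `H_e` at a nonzero
idempotent `e`. -/
theorem brandt_hom_classification {I₁ I₂ S T : Type*}
    [MonoidWithZero S] [MonoidWithZero T] [Nonempty I₁] (ι : I₁ ↪ I₂)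
    (hcentral : ∀ e : T, e * e = e → ∀ x : T, e * x = x * e)
    (hno1 : ¬∃ f : MatrixUnits I₁ → T,
        Function.Injective f ∧ ∀ x y, f (x * y) = f x * f y)
    (hno2 : ¬∃ f : MatrixUnits (Fin 2) → T,
        Function.Injective f ∧ (∀ x y, f (x * y) = f x * f y) ∧ f 0 = 0)
    (σ : Brandt I₁ S → Brandt I₂ T)
    (hmul : ∀ x y, σ (x * y) = σ x * σ y)
    (hnt : ∃ x y, σ x ≠ σ y) :
    ∃ (h : S → T) (φ : I₁ → I₂) (e : T) (u v : I₁ → T),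
      (∀ s t : S, h (s * t) = h s * h t) ∧ h 0 = 0 ∧
      Function.Injective φ ∧
      e * e = e ∧ e ≠ 0 ∧
      (∀ a : I₁, u a * e = u a ∧ e * u a = u a ∧ v a * e = v a ∧ e * v a = v a ∧
        u a * v a = e ∧ v a * u a = e) ∧
      σ = brandtHomMap φ u v h :=
  brandt_hom_classification_general hcentral hno1 hno2 σ hmul hnt
end
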